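/- If C is an [n,k] MDS code with k > n/2, then dim(C²) = n. -/

import Mathlib

open Polynomial

/-- Hamming weight of a vector. -/
noncomputable def wt {F : Type*} [Zero F] {n : ℕ} (x : Fin n → F) : ℕ :=
  Nat.card {i // x i ≠ 0}

/-- The Schur product code: span of all componentwise products of codewords. -/
def schurCode {F : Type*} [Field F] {n : ℕ} (C₁ C₂ : Submodule F (Fin n → F)) :
    Submodule F (Fin n → F) :=
  Submodule.span F { z | ∃ c₁ ∈ C₁, ∃ c₂ ∈ C₂, z = fun i => c₁ i * c₂ i }

/-!
An `[n, k]` MDS code has a codeword whose zero set is any prescribed set `A` of `k - 1`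
coordinates: a nonzero codeword vanishing on `A` exists by dimension count, and it has at most
`k - 1` zeros. When `2k - 1 ≥ n`, the complement of a coordinate `i` is the union of two such
sets `A` and `B`, so the product of the corresponding codewords is supported exactly at `i`.
Hence every standard basis vector lies in `C²`.
-/

open Module Function

lemma wt_eq_ncard_support {F : Type*} [Zero F] {n : ℕ} (x : Fin n → F) :
    wt x = (support x).ncard :=
  Nat.card_coe_set_eq _

lemma mul_mem_schurCode {F : Type*} [Field F] {n : ℕ} {C₁ C₂ : Submodule F (Fin n → F)}
    {c₁ c₂ : Fin n → F} (h₁ : c₁ ∈ C₁) (h₂ : c₂ ∈ C₂) : c₁ * c₂ ∈ schurCode C₁ C₂ :=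
  Submodule.subset_span ⟨c₁, h₁, c₂, h₂, rfl⟩

lemma Submodule.single_one_mem_of_support_eq_singleton {F ι : Type*} [Field F] [DecidableEq ι]
    {S : Submodule F (ι → F)} {z : ι → F} {i : ι} (hz : z ∈ S) (hsupp : support z = {i}) :
    Pi.single i 1 ∈ S := by
  have hzi : z i ≠ 0 := by simp [← mem_support, hsupp]
  have hz_single : z = Pi.single i (z i) := by
    ext j
    by_cases hj : j = i
    · subst hj; simp
    · simpa [hj] using (Set.ext_iff.mp hsupp j).not.mpr hj
  have : Pi.single i (1 : F) = (z i)⁻¹ • z := by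
    rw [hz_single, ← Pi.single_smul', smul_eq_mul, Pi.single_apply, if_pos rfl, inv_mul_cancel₀ hzi]
  exact this ▸ S.smul_mem _ hz

lemma Submodule.eq_top_of_forall_single_one_mem {F ι : Type*} [Field F] [Finite ι]
    [DecidableEq ι] {S : Submodule F (ι → F)} (h : ∀ i, Pi.single i 1 ∈ S) : S = ⊤ := by
  have := Fintype.ofFinite ι
  rw [eq_top_iff, ← (Pi.basisFun F ι).span_eq, Submodule.span_le]
  rintro _ ⟨i, rfl⟩
  simpa using h i

lemma Finset.exists_union_eq_of_card_le_two_mul {α : Type*} [DecidableEq α] {s : Finset α}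
    {m : ℕ} (hm : m ≤ s.card) (hs : s.card ≤ 2 * m) :
    ∃ A ⊆ s, ∃ B ⊆ s, A.card = m ∧ B.card = m ∧ A ∪ B = s := by
  obtain ⟨A, hAs, hA⟩ := s.exists_subset_card_eq hm
  obtain ⟨B, hAB, hBs, hB⟩ :=
    exists_subsuperset_card_eq (s.sdiff_subset (t := A)) (by rw [card_sdiff_of_subset hAs]; omega) hm
  exact ⟨A, hAs, B, hBs, hA, hB, subset_antisymm (union_subset hAs hBs)
    fun x hx => if hxA : x ∈ A then mem_union_left _ hxA else mem_union_right _ (hAB (by simp [*]))⟩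

lemma Submodule.exists_ne_zero_mem_forall_eq_zero {F ι : Type*} [Field F]
    (C : Submodule F (ι → F)) [FiniteDimensional F C] (A : Finset ι)
    (hA : A.card < finrank F C) : ∃ c ∈ C, c ≠ 0 ∧ ∀ a ∈ A, c a = 0 := by
  let restrict : C →ₗ[F] (A → F) := LinearMap.pi fun a => (LinearMap.proj (a : ι)).comp C.subtype
  obtain ⟨c, hc, hc0⟩ := Submodule.exists_mem_ne_zero_of_ne_bot <|
    restrict.ker_ne_bot_of_finrank_lt (by rwa [finrank_pi, Fintype.card_coe])
  exact ⟨c, c.2, by simpa using hc0, fun a ha => congrFun (LinearMap.mem_ker.mp hc) ⟨a, ha⟩⟩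

lemma exists_mem_support_eq_compl {F : Type*} [Field F] {n : ℕ} (C : Submodule F (Fin n → F))
    (A : Finset (Fin n)) (hA : A.card < finrank F C)
    (hw : ∀ c ∈ C, c ≠ 0 → n - A.card ≤ wt c) : ∃ c ∈ C, support c = ↑Aᶜ := by
  obtain ⟨c, hcC, hc0, hcA⟩ := C.exists_ne_zero_mem_forall_eq_zero A hA
  refine ⟨c, hcC, Set.eq_of_subset_of_ncard_le ?_ ?_ (Set.toFinite _)⟩
  · intro j hj
    simpa using fun hjA => hj (hcA j hjA)
  · rw [Set.ncard_coe_finset, Finset.card_compl, Fintype.card_fin, ← wt_eq_ncard_support]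
    exact hw c hcC hc0

lemma single_one_mem_schurCode_self_of_MDS {F : Type*} [Field F] {n k : ℕ}
    (C : Submodule F (Fin n → F)) (hdim : finrank F C = k) (hrate : n < 2 * k)
    (hw : ∀ c ∈ C, c ≠ 0 → n - k + 1 ≤ wt c) (i : Fin n) :
    Pi.single i 1 ∈ schurCode C C := by
  have hkn : k ≤ n := hdim ▸ C.finrank_le.trans_eq (finrank_fin_fun F)
  have hcard : ({i}ᶜ : Finset (Fin n)).card = n - 1 := by
    rw [Finset.card_compl, Finset.card_singleton, Fintype.card_fin]
  obtain ⟨A, -, B, -, hA, hB, hAB⟩ :=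
    Finset.exists_union_eq_of_card_le_two_mul (s := {i}ᶜ) (m := k - 1)
      (by omega) (by omega)
  have hw' : ∀ c ∈ C, c ≠ 0 → n - (k - 1) ≤ wt c := fun c hc hc0 => by
    have := hw c hc hc0; omega
  obtain ⟨c, hc, hcA⟩ := exists_mem_support_eq_compl C A (by omega) (hA ▸ hw')
  obtain ⟨c', hc', hcB⟩ := exists_mem_support_eq_compl C B (by omega) (hB ▸ hw')
  refine Submodule.single_one_mem_of_support_eq_singleton (mul_mem_schurCode hc hc') ?_
  rw [Pi.mul_def, support_mul, hcA, hcB, ← Finset.coe_inter, ← Finset.compl_union, hAB,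
    compl_compl, Finset.coe_singleton]

theorem schurSquare_eq_n_of_MDS_high_rate_general {F : Type*} [Field F]
    {n k : ℕ} (C : Submodule F (Fin n → F))
    (hdim : Module.finrank F C = k) (hrate : n < 2 * k)
    (hMDS : (∀ c ∈ C, c ≠ 0 → n - k + 1 ≤ wt c) ∧
      ∃ c ∈ C, c ≠ 0 ∧ wt c = n - k + 1) :
    Module.finrank F (schurCode C C) = n := by
  have htop : schurCode C C = ⊤ := Submodule.eq_top_of_forall_single_one_mem
    (single_one_mem_schurCode_self_of_MDS C hdim hrate hMDS.1)
  rw [htop, finrank_top, finrank_fin_fun]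

/-- If `C` is an `[n,k]` MDS code with `k > n/2`, then its Schur square has
full dimension `n`. -/
theorem schurSquare_eq_n_of_MDS_high_rate {F : Type*} [Field F] [Fintype F]
    {n k : ℕ} (C : Submodule F (Fin n → F))
    (hdim : Module.finrank F C = k) (hrate : n < 2 * k)
    (hMDS : (∀ c ∈ C, c ≠ 0 → n - k + 1 ≤ wt c) ∧
      ∃ c ∈ C, c ≠ 0 ∧ wt c = n - k + 1) :
    Module.finrank F (schurCode C C) = n :=
  schurSquare_eq_n_of_MDS_high_rate_general C hdim hrate hMDS
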